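/- Let F'/F be a quadratic field extension, A an F-algebra, and X an irreducible A⊗_F F'-module. Then X is defined over F (i.e., admits a model over F) if and only if the restriction of scalars Y = res_{F'/F} X is a reducible A-module. Moreover, in this case Y decomposes into two isomorphic irreducible summands. -/

import Mathlib

open scoped TensorProduct

/-!
Choose `α ∈ F' \ F`, so that `(1, α)` is an `F`-basis of `F'`; multiplication by `α` is an
`A`-linear automorphism of `Y = res X'`. Writing `F' ⊗_F M ≅ M × M` in this basis shows that an
`F`-subspace `M` is a model exactly when `Y = M ⊕ αM`.

For an `A`-submodule `Z`, both `Z ⊓ αZ` and `Z ⊔ αZ` are stable under `α` (as `α² ∈ F + Fα`),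
hence under `F' = F + Fα`. Irreducibility of `X'` therefore forces `Y = Z ⊕ αZ` for every proper
nonzero `Z`: such a `Z` is a model, while a model `M` can be neither `0` nor `Y`. Finally, if
`0 < Z' < Z` then `Y = Z' ⊕ αZ'` and the modular law give `Z = Z' ⊕ (Z ⊓ αZ') = Z'`, so `Z` is
irreducible and `α : Z ≅ αZ`.
-/

/-- The canonical `F`-linear map `F' ⊗_F M → X'`, `c ⊗ m ↦ c • m`, associated to an
`F`-subspace `M` of an `A ⊗_F F'`-module `X'`. -/
noncomputable def modelMap (F F' : Type) [Field F] [Field F'] [Algebra F F']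
    (X' : Type) [AddCommGroup X'] [Module F X'] [Module F' X']
    [IsScalarTower F F' X'] [SMulCommClass F F' X']
    (M : Submodule F X') : (F' ⊗[F] ↥M) →ₗ[F] X' :=
  TensorProduct.lift
    (LinearMap.mk₂ F (fun (c : F') (m : ↥M) => c • (m : X'))
      (fun a b m => by simp [add_smul])
      (fun r a m => by simp [smul_assoc])
      (fun a m₁ m₂ => by simp [smul_add])
      (fun r a m => by
        simp only [SetLike.val_smul]
        exact smul_comm a r (m : X')))

open Function Module

theorem LinearMap.bijective_coprod_iff_isCompl_range {R M N E : Type*} [Ring R]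
    [AddCommGroup M] [AddCommGroup N] [AddCommGroup E] [Module R M] [Module R N] [Module R E]
    {f : M →ₗ[R] E} {g : N →ₗ[R] E} (hf : Injective f) (hg : Injective g) :
    Bijective (f.coprod g) ↔ IsCompl (range f) (range g) := by
  rw [Bijective, ← ker_eq_bot, ← range_eq_top, range_coprod, ← codisjoint_iff, isCompl_iff]
  refine and_congr_left' ⟨fun h => Submodule.disjoint_def.2 ?_, fun h => ?_⟩
  · rintro _ ⟨m, rfl⟩ ⟨n, hn⟩
    have : (m, -n) ∈ ker (f.coprod g) := by simp [hn]
    simp_all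
  · rw [ker_coprod_of_disjoint_range f g h, ker_eq_bot.2 hf, ker_eq_bot.2 hg, Submodule.prod_bot]

theorem Module.Basis.exists_fin_two_eq_one {F F' : Type*} [Field F] [Field F'] [Algebra F F']
    (h : finrank F F' = 2) : ∃ b : Basis (Fin 2) F F', b 0 = 1 := by
  obtain ⟨α, hα⟩ : ∃ α : F', α ∉ (⊥ : Subalgebra F F') := by
    by_contra! hbot
    have := Subalgebra.bot_eq_top_iff_finrank_eq_one.1 (eq_top_iff.2 fun x _ => hbot x)
    omega
  have hli : LinearIndependent F ![1, α] :=
    (LinearIndependent.pair_iff' one_ne_zero).2 fun a ha =>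
      hα (ha ▸ Subalgebra.smul_mem _ (one_mem _) a)
  exact ⟨basisOfLinearIndependentOfCardEqFinrank hli (by simp [h]), by simp⟩

section Model

variable {F F' X : Type} [Field F] [Field F'] [Algebra F F'] [AddCommGroup X] [Module F X]
  [Module F' X] [IsScalarTower F F' X] [SMulCommClass F F' X]

@[simp]
theorem modelMap_tmul (M : Submodule F X) (c : F') (m : M) :
    modelMap F F' X M (c ⊗ₜ m) = c • (m : X) :=
  rfl

theorem modelMap_bijective_iff_isCompl {b : Basis (Fin 2) F F'} (hb : b 0 = 1)
    (M : Submodule F X) :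
    Bijective (modelMap F F' X M) ↔
      IsCompl M (M.map (DistribSMul.toLinearMap F X (b 1))) := by
  let e : (M × M) ≃ₗ[F] F' ⊗[F] M := (LinearEquiv.piFinTwo F fun _ => M).symm ≪≫ₗ
    (Finsupp.linearEquivFunOnFinite F M (Fin 2)).symm ≪≫ₗ
    (TensorProduct.equivFinsuppOfBasisLeft b).symm
  have he : modelMap F F' X M ∘ₗ e.toLinearMap =
      M.subtype.coprod (DistribSMul.toLinearMap F X (b 1) ∘ₗ M.subtype) := by
    ext m <;> simp [e, hb, Finsupp.sum_fintype, Fin.sum_univ_two]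
  have hα : Injective (DistribSMul.toLinearMap F X (b 1)) := smul_right_injective X (b.ne_zero 1)
  rw [← Bijective.of_comp_iff _ e.bijective, ← LinearEquiv.coe_coe, ← LinearMap.coe_comp, he,
    LinearMap.bijective_coprod_iff_isCompl_range M.injective_subtype (g := _ ∘ₗ _)
      (hα.comp M.injective_subtype),
    LinearMap.range_comp, Submodule.range_subtype]

end Model

theorem Submodule.exists_ne_bot_ne_top_of_not_isSimpleModule {R M : Type*} [Ring R]
    [AddCommGroup M] [Module R M] [Nontrivial M] (h : ¬IsSimpleModule R M) :
    ∃ N : Submodule R M, N ≠ ⊥ ∧ N ≠ ⊤ := by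
  by_contra! hN
  have : IsSimpleOrder (Submodule R M) := ⟨fun N => or_iff_not_imp_left.2 (hN N)⟩
  exact h ⟨⟩

section Descent

variable {F F' A X : Type*} [Field F] [Field F'] [Algebra F F'] [Ring A] [Algebra F A]
  [AddCommGroup X] [Module F X] [Module F' X] [Module A X] [IsScalarTower F F' X]
  [IsScalarTower F A X] {b : Basis (Fin 2) F F'}

theorem smul_eq_repr_smul_add_repr_smul (hb : b 0 = 1) (c : F') (x : X) :
    c • x = b.repr c 0 • x + b.repr c 1 • b 1 • x := by
  conv_lhs => rw [← b.sum_repr c]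
  rw [Fin.sum_univ_two, hb, add_smul, smul_assoc, smul_assoc, one_smul]

theorem Submodule.smul_mem_of_basis_one_smul_mem (hb : b 0 = 1) {p : Submodule A X}
    (hp : ∀ x ∈ p, b 1 • x ∈ p) : ∀ (c : F'), ∀ x ∈ p, c • x ∈ p := fun c x hx => by
  rw [smul_eq_repr_smul_add_repr_smul hb]
  exact add_mem (p.smul_of_tower_mem _ hx) (p.smul_of_tower_mem _ (hp x hx))

variable [SMulCommClass F' A X]

theorem not_isSimpleModule_of_isCompl_map_smul [Nontrivial X] {α : F'} (hα : α ≠ 0)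
    {N : Submodule A X} (h : IsCompl N (N.map (DistribSMul.toLinearMap A X α))) :
    ¬IsSimpleModule A X := by
  intro hX
  rcases IsSimpleOrder.eq_bot_or_eq_top N with rfl | rfl
  · rw [Submodule.map_bot] at h
    exact bot_ne_top (eq_top_of_isCompl_bot h)
  · have hsurj : Surjective (DistribSMul.toLinearMap A X α) := fun x =>
      ⟨α⁻¹ • x, smul_inv_smul₀ hα x⟩
    rw [Submodule.map_top (DistribSMul.toLinearMap A X α), LinearMap.range_eq_top.2 hsurj] at h
    exact top_ne_bot (eq_bot_of_isCompl_top h)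

local notation "σ" => DistribSMul.toLinearMap A X (b 1)

theorem smul_mem_sup_map_smul (hb : b 0 = 1) (Z : Submodule A X) :
    ∀ (c : F'), ∀ x ∈ Z ⊔ Z.map σ, c • x ∈ Z ⊔ Z.map σ := by
  refine Submodule.smul_mem_of_basis_one_smul_mem hb fun x hx => ?_
  obtain ⟨z, hz, _, ⟨z', hz', rfl⟩, rfl⟩ := Submodule.mem_sup.1 hx
  rw [smul_add, DistribSMul.toLinearMap_apply, smul_smul,
    smul_eq_repr_smul_add_repr_smul hb (b 1 * b 1)]
  exact add_mem (Submodule.mem_sup_right (Submodule.mem_map_of_mem hz))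
    (add_mem (Submodule.mem_sup_left (Z.smul_of_tower_mem _ hz')) (Submodule.smul_of_tower_mem _ _
      (Submodule.mem_sup_right (Submodule.mem_map_of_mem hz'))))

theorem smul_mem_inf_map_smul (hb : b 0 = 1) (Z : Submodule A X) :
    ∀ (c : F'), ∀ x ∈ Z ⊓ Z.map σ, c • x ∈ Z ⊓ Z.map σ := by
  refine Submodule.smul_mem_of_basis_one_smul_mem hb fun x ⟨hxZ, z, hz, hzx⟩ =>
    ⟨?_, Submodule.mem_map_of_mem hxZ⟩
  rw [DistribSMul.toLinearMap_apply] at hzx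
  rw [← hzx, smul_smul, smul_eq_repr_smul_add_repr_smul hb (b 1 * b 1), hzx]
  exact add_mem (Z.smul_of_tower_mem _ hz) (Z.smul_of_tower_mem _ hxZ)

theorem isCompl_map_smul_of_ne_bot_of_ne_top (hb : b 0 = 1)
    (hsimple : ∀ p : Submodule A X, (∀ (c : F'), ∀ x ∈ p, c • x ∈ p) → p = ⊥ ∨ p = ⊤)
    {Y : Submodule A X} (hY₀ : Y ≠ ⊥) (hY₁ : Y ≠ ⊤) :
    IsCompl Y (Y.map σ) where
  disjoint := disjoint_iff.2 <| (hsimple _ (smul_mem_inf_map_smul hb Y)).resolve_right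
    fun h => hY₁ (eq_top_iff.2 (h ▸ inf_le_left))
  codisjoint := codisjoint_iff.2 <| (hsimple _ (smul_mem_sup_map_smul hb Y)).resolve_left
    fun h => hY₀ (eq_bot_iff.2 (h ▸ le_sup_left))

theorem isAtom_of_ne_bot_of_ne_top (hb : b 0 = 1)
    (hsimple : ∀ p : Submodule A X, (∀ (c : F'), ∀ x ∈ p, c • x ∈ p) → p = ⊥ ∨ p = ⊤)
    {Y : Submodule A X} (hY₀ : Y ≠ ⊥) (hY₁ : Y ≠ ⊤) :
    IsAtom Y := by
  refine ⟨hY₀, fun Z hZY => by_contra fun hZ => hZY.ne ?_⟩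
  have hZ : IsCompl Z (Z.map σ) :=
    isCompl_map_smul_of_ne_bot_of_ne_top hb hsimple hZ (hZY.trans_le le_top).ne
  have hYZ : Z.map σ ⊓ Y = ⊥ := eq_bot_iff.2 <|
    (inf_le_inf_right Y (Submodule.map_mono hZY.le)).trans
      (isCompl_map_smul_of_ne_bot_of_ne_top hb hsimple hY₀ hY₁).symm.inf_eq_bot.le
  calc Z = Z ⊔ Z.map σ ⊓ Y := by rw [hYZ, sup_bot_eq]
    _ = (Z ⊔ Z.map σ) ⊓ Y := (sup_inf_assoc_of_le (Z.map σ) hZY.le).symm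
    _ = Y := by rw [hZ.sup_eq_top, top_inf_eq]

end Descent

/-- **Descent criterion along a quadratic extension.**
Let `F'/F` be a quadratic field extension, `A` an `F`-algebra, and `X'` an irreducible
`A ⊗_F F'`-module (encoded via commuting `A`- and `F'`-actions).  Then `X'` is defined over
`F` (i.e. admits an `A`-stable `F`-form `M` with `F' ⊗_F M ≅ X'`) if and only if the
restriction of scalars `Y = res_{F'/F} X'` is a *reducible* `A`-module; and in this case `Y`
decomposes as a direct sum of two isomorphic irreducible `A`-submodules. -/
theorem definedOver_iff_restriction_reducible
    (F F' : Type) [Field F] [Field F'] [Algebra F F']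
    (hquad : Module.finrank F F' = 2)
    (A : Type) [Ring A] [Algebra F A]
    (X' : Type) [AddCommGroup X'] [Module F X'] [Module F' X'] [Module A X']
    [IsScalarTower F F' X'] [IsScalarTower F A X'] [SMulCommClass A F' X']
    [SMulCommClass F F' X']
    (hnt : Nontrivial X')
    (hsimple : ∀ p : Submodule A X',
      (∀ (c : F'), ∀ x ∈ p, c • x ∈ p) → p = ⊥ ∨ p = ⊤) :
    ((∃ M : Submodule F X',
        (∀ (a : A), ∀ x ∈ M, a • x ∈ M) ∧ Function.Bijective (modelMap F F' X' M)) ↔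
      ¬ IsSimpleModule A X') ∧
    (¬ IsSimpleModule A X' →
      ∃ Y₁ Y₂ : Submodule A X', IsCompl Y₁ Y₂ ∧
        IsSimpleModule A ↥Y₁ ∧ IsSimpleModule A ↥Y₂ ∧ Nonempty (↥Y₁ ≃ₗ[A] ↥Y₂)) := by
  obtain ⟨b, hb⟩ := Basis.exists_fin_two_eq_one hquad
  have := SMulCommClass.symm A F' X'
  have hmodel (N : Submodule A X') : Bijective (modelMap F F' X' (N.restrictScalars F)) ↔
      IsCompl N (N.map (DistribSMul.toLinearMap A X' (b 1))) :=
    (modelMap_bijective_iff_isCompl hb _).trans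
      (Submodule.isCompl_restrictScalars_iff F (t := N.map (DistribSMul.toLinearMap A X' (b 1))))
  refine ⟨⟨?_, fun hX => ?_⟩, fun hX => ?_⟩
  · rintro ⟨M, hMA, hM⟩
    obtain ⟨N, rfl⟩ : ∃ N : Submodule A X', N.restrictScalars F = M :=
      ⟨{ M with smul_mem' := hMA }, rfl⟩
    exact not_isSimpleModule_of_isCompl_map_smul (b.ne_zero 1) ((hmodel N).1 hM)
  · obtain ⟨Y, hY₀, hY₁⟩ := Submodule.exists_ne_bot_ne_top_of_not_isSimpleModule hX
    exact ⟨Y.restrictScalars F, fun a _ hx => Y.smul_mem a hx,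
      (hmodel Y).2 (isCompl_map_smul_of_ne_bot_of_ne_top hb hsimple hY₀ hY₁)⟩
  · obtain ⟨Y, hY₀, hY₁⟩ := Submodule.exists_ne_bot_ne_top_of_not_isSimpleModule hX
    have hY : IsSimpleModule A Y :=
      isSimpleModule_iff_isAtom.2 (isAtom_of_ne_bot_of_ne_top hb hsimple hY₀ hY₁)
    let e := Submodule.equivMapOfInjective (DistribSMul.toLinearMap A X' (b 1))
      (smul_right_injective X' (b.ne_zero 1)) Y
    exact ⟨Y, _, isCompl_map_smul_of_ne_bot_of_ne_top hb hsimple hY₀ hY₁, hY,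
      IsSimpleModule.congr e.symm, ⟨e⟩⟩
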